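/- Let V : ℝ → ℝ be continuous, and let μ_V be a compactly supported probability measure on ℝ, absolutely continuous with respect to Lebesgue measure, with finite logarithmic potential energy I_V(μ_V), such that for some constant c_V the function ζ_V(x) = ∫ −log|x−y| dμ_V(y) + V(x)/2 − c_V vanishes on the support of μ_V. Then for every N ≥ 1 and every X = (x_1,…,x_N) ∈ ℝ^N one has the splitting formula H_N^V(X) = N² I_V(μ_V) + 2N Σ_{i=1}^N ζ_V(x_i) + F_N(X, μ_V). -/

import Mathlib

open MeasureTheory Filter Real Topology

noncomputable section

/-- The `N`-point energy `H_N^V`. -/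
def HN (N : ℕ) (V : ℝ → ℝ) (X : Fin N → ℝ) : ℝ :=
  (∑ i : Fin N, ∑ j : Fin N, if i ≠ j then -Real.log |X i - X j| else 0)
    + N * ∑ i : Fin N, V (X i)

/-- Partition function `Z_{N,β}^V`. -/
def ZN (N : ℕ) (β : ℝ) (V : ℝ → ℝ) : ℝ :=
  ∫ X : Fin N → ℝ, Real.exp (-(β / 2) * HN N V X)

/-- The Gibbs measure `P_{N,β}^V`. -/
def PN (N : ℕ) (β : ℝ) (V : ℝ → ℝ) : Measure (Fin N → ℝ) :=
  volume.withDensity fun X => ENNReal.ofReal (Real.exp (-(β / 2) * HN N V X) / ZN N β V)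

/-- Logarithmic potential energy `I_V(μ)`. -/
def IV (V : ℝ → ℝ) (μ : Measure ℝ) : ℝ :=
  (∫ x, ∫ y, -Real.log |x - y| ∂μ ∂μ) + ∫ x, V x ∂μ

/-- Fluctuation of the linear statistics of `ξ`: `∫ ξ d(∑ δ_{x_i} - N μ_V)`. -/
def Fluct (N : ℕ) (μV : Measure ℝ) (ξ : ℝ → ℝ) (X : Fin N → ℝ) : ℝ :=
  (∑ i : Fin N, ξ (X i)) - N * ∫ x, ξ x ∂μV

/-- Next-order energy `F_N(X, μ)`: the double integral of `-log|x-y|` against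
`(∑ δ_{x_i} - Nμ)⊗(∑ δ_{x_i} - Nμ)` off the diagonal, written out in expanded form
(valid since `μ` is atomless in all applications). -/
def FN (N : ℕ) (μ : Measure ℝ) (X : Fin N → ℝ) : ℝ :=
  (∑ i : Fin N, ∑ j : Fin N, if i ≠ j then -Real.log |X i - X j| else 0)
    + 2 * N * ∑ i : Fin N, ∫ y, Real.log |X i - y| ∂μ
    + N ^ 2 * ∫ x, ∫ y, -Real.log |x - y| ∂μ ∂μ

/-- Effective confinement `ζ_V`. -/
def zetaV (V : ℝ → ℝ) (μV : Measure ℝ) (cV : ℝ) (x : ℝ) : ℝ :=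
  (∫ y, -Real.log |x - y| ∂μV) + V x / 2 - cV

/-- Difference quotient of `ψ`, understood as `ψ'` on the diagonal. -/
def dq (ψ : ℝ → ℝ) (x y : ℝ) : ℝ :=
  if x = y then deriv ψ x else (ψ x - ψ y) / (x - y)

/-- The master operator `Ξ_V`. -/
def XiOp (V : ℝ → ℝ) (μV : Measure ℝ) (ψ : ℝ → ℝ) (x : ℝ) : ℝ :=
  -(1 / 2) * ψ x * deriv V x + ∫ y, dq ψ x y ∂μV

/-- The `C^j(U)` norm: sum of sup norms on `U` of the first `j` derivatives. -/
def Cnorm (j : ℕ) (U : Set ℝ) (ψ : ℝ → ℝ) : ℝ :=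
  ∑ i ∈ Finset.range (j + 1), ⨆ x ∈ U, |iteratedDeriv i ψ x|

/-- The anisotropy term `𝖠[X, ψ] = ∬ (ψ(x)-ψ(y))/(x-y) dfluct_N dfluct_N`, expanded. -/
def aniso (N : ℕ) (μV : Measure ℝ) (ψ : ℝ → ℝ) (X : Fin N → ℝ) : ℝ :=
  (∑ i : Fin N, ∑ j : Fin N, dq ψ (X i) (X j))
    - 2 * N * ∑ i : Fin N, ∫ y, dq ψ (X i) y ∂μV
    + N ^ 2 * ∫ x, ∫ y, dq ψ x y ∂μV ∂μV

/-- `σ(x) = ∏_l √(|x-α_{l,-}||x-α_{l,+}|)`. -/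
def sigmaFn (n : ℕ) (αm αp : Fin (n + 1) → ℝ) (x : ℝ) : ℝ :=
  ∏ l : Fin (n + 1), Real.sqrt (|x - αm l| * |x - αp l|)

/-- `S(x) = S₀(x) ∏_i (x - s_i)^{2 k_i}`. -/
def SFn (m : ℕ) (S0 : ℝ → ℝ) (spt : Fin m → ℝ) (kk : Fin m → ℕ) (x : ℝ) : ℝ :=
  S0 x * ∏ i : Fin m, (x - spt i) ^ (2 * kk i)

/-- The support `Σ_V = ⋃_l [α_{l,-}, α_{l,+}]`. -/
def SigmaSet (n : ℕ) (αm αp : Fin (n + 1) → ℝ) : Set ℝ :=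
  ⋃ l : Fin (n + 1), Set.Icc (αm l) (αp l)

/-- Taylor expansion `R_{x,d} ξ` of order `d-1` of `ξ` around `x`. -/
def taylorR (ξ : ℝ → ℝ) (x : ℝ) (d : ℕ) (y : ℝ) : ℝ :=
  ∑ j ∈ Finset.range d, iteratedDeriv j ξ x * (y - x) ^ j / (Nat.factorial j)

/-- Next-order partition function `K_{N,β}(μ, ζ)`. -/
def KN (N : ℕ) (β : ℝ) (μ : Measure ℝ) (ζ : ℝ → ℝ) : ℝ :=
  ∫ X : Fin N → ℝ, Real.exp (-(β / 2) * (FN N μ X + 2 * N * ∑ i : Fin N, ζ (X i)))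

/-!
Expanding `F_N(X, μ_V)` and `ζ_V`, the identity reduces to `c_V = ∬ -log|x-y| dμ_V dμ_V + ½ ∫ V dμ_V`.
This value of the constant is forced by integrating `ζ_V` against `μ_V`: since `ζ_V` vanishes
on the support of `μ_V`, its integral is zero.
-/

theorem ae_mem_tsupport_withDensity_ofReal {α : Type*} [TopologicalSpace α] [MeasurableSpace α]
    [OpensMeasurableSpace α] (μ : Measure α) (f : α → ℝ) :
    ∀ᵐ x ∂μ.withDensity (fun x => ENNReal.ofReal (f x)), x ∈ tsupport f := by
  have hopen : MeasurableSet (tsupport f)ᶜ := (isClosed_tsupport f).isOpen_compl.measurableSet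
  change μ.withDensity _ (tsupport f)ᶜ = 0
  rw [withDensity_apply _ hopen, setLIntegral_congr_fun (g := fun _ => 0) hopen
    fun x hx => by simp [image_eq_zero_of_notMem_tsupport hx]]
  simp

theorem integral_zetaV (V : ℝ → ℝ) (μ : Measure ℝ) [IsProbabilityMeasure μ] (c : ℝ)
    (hlog : Integrable (fun q : ℝ × ℝ => Real.log |q.1 - q.2|) (μ.prod μ))
    (hV : Integrable V μ) :
    ∫ x, zetaV V μ c x ∂μ = (∫ x, ∫ y, -Real.log |x - y| ∂μ ∂μ) + (∫ x, V x ∂μ) / 2 - c := by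
  have hpot : Integrable (fun x => ∫ y, -Real.log |x - y| ∂μ) μ := by
    simpa using hlog.neg.integral_prod_left
  have hV2 : Integrable (fun x => V x / 2) μ := hV.div_const 2
  have hsum : Integrable (fun x => (∫ y, -Real.log |x - y| ∂μ) + V x / 2) μ := hpot.add hV2
  unfold zetaV
  rw [integral_sub hsum (integrable_const c), integral_add hpot hV2, integral_const,
    integral_div]
  simp

theorem const_eq_of_zetaV_ae_eq_zero (V : ℝ → ℝ) (μ : Measure ℝ) [IsProbabilityMeasure μ]
    (c : ℝ) (hlog : Integrable (fun q : ℝ × ℝ => Real.log |q.1 - q.2|) (μ.prod μ))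
    (hV : Integrable V μ) (hζ : zetaV V μ c =ᵐ[μ] 0) :
    c = (∫ x, ∫ y, -Real.log |x - y| ∂μ ∂μ) + (∫ x, V x ∂μ) / 2 := by
  have h := integral_zetaV V μ c hlog hV
  rw [integral_congr_ae hζ, Pi.zero_def, integral_zero] at h
  linarith

theorem HN_eq_splitting_of_const_eq (V : ℝ → ℝ) (μ : Measure ℝ) (c : ℝ)
    (hc : c = (∫ x, ∫ y, -Real.log |x - y| ∂μ ∂μ) + (∫ x, V x ∂μ) / 2)
    (N : ℕ) (X : Fin N → ℝ) :
    HN N V X = N ^ 2 * IV V μ + 2 * N * (∑ i : Fin N, zetaV V μ c (X i)) + FN N μ X := by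
  have hlog_neg (x : ℝ) : ∫ y, Real.log |x - y| ∂μ = -∫ y, -Real.log |x - y| ∂μ := by
    rw [integral_neg, neg_neg]
  simp only [HN, IV, FN, zetaV, hlog_neg, hc]
  rw [Finset.sum_neg_distrib, Finset.sum_sub_distrib, Finset.sum_add_distrib, Finset.sum_const,
    Finset.card_univ, Fintype.card_fin, ← Finset.sum_div, nsmul_eq_mul]
  ring

theorem splitting_formula_general
    (V : ℝ → ℝ)
    (μV : Measure ℝ) (hprob : IsProbabilityMeasure μV)
    -- μV is absolutely continuous with compactly supported density f
    (f : ℝ → ℝ)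
    (hμ : μV = volume.withDensity fun x => ENNReal.ofReal (f x))
    -- finiteness of the logarithmic potential energy
    (hlogint : Integrable (fun q : ℝ × ℝ => Real.log |q.1 - q.2|) (μV.prod μV))
    (hVint : Integrable V μV)
    -- ζ_V vanishes on the support of μ_V
    (cV : ℝ) (hζ : ∀ x ∈ tsupport f, zetaV V μV cV x = 0)
    (N : ℕ) (X : Fin N → ℝ) :
    HN N V X = N ^ 2 * IV V μV + 2 * N * (∑ i : Fin N, zetaV V μV cV (X i))
      + FN N μV X := by
  have hsupp : ∀ᵐ x ∂μV, x ∈ tsupport f := hμ ▸ ae_mem_tsupport_withDensity_ofReal volume f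
  have hζae : zetaV V μV cV =ᵐ[μV] 0 := hsupp.mono hζ
  exact HN_eq_splitting_of_const_eq V μV cV
    (const_eq_of_zetaV_ae_eq_zero V μV cV hlogint hVint hζae) N X

/-- **The splitting formula** (Lemma 2.1 of Bekerman–Leblé–Serfaty):
`H_N^V(X) = N² I_V(μ_V) + 2N ∑ᵢ ζ_V(xᵢ) + F_N(X, μ_V)`. -/
theorem splitting_formula
    (V : ℝ → ℝ) (hV : Continuous V)
    (μV : Measure ℝ) (hprob : IsProbabilityMeasure μV)
    -- μV is absolutely continuous with compactly supported density f
    (f : ℝ → ℝ) (hf0 : ∀ x, 0 ≤ f x)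
    (hμ : μV = volume.withDensity fun x => ENNReal.ofReal (f x))
    (hfc : HasCompactSupport f)
    -- finiteness of the logarithmic potential energy
    (hlogint : Integrable (fun q : ℝ × ℝ => Real.log |q.1 - q.2|) (μV.prod μV))
    (hVint : Integrable V μV)
    -- ζ_V vanishes on the support of μ_V
    (cV : ℝ) (hζ : ∀ x ∈ tsupport f, zetaV V μV cV x = 0)
    (N : ℕ) (hN : 1 ≤ N) (X : Fin N → ℝ) :
    HN N V X = N ^ 2 * IV V μV + 2 * N * (∑ i : Fin N, zetaV V μV cV (X i))
      + FN N μV X :=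
  splitting_formula_general V μV hprob f hμ hlogint hVint cV hζ N X

end
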